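/- arXiv:2102.02848 — 2 statements merged into one kernel-verified Lean document; each statement's English description precedes it below -/
import Mathlib

section
/- Let M be an irreducible nonnegative integer n×n matrix (n ≥ 1) whose every row sum is at least 1. If the Perron–Frobenius eigenvalue (spectral radius) of M equals 1, then M is a permutation matrix, and moreover the corresponding permutation is a single n-cycle (M is a transitive permutation matrix). -/
/-!
Since every eigenvalue of `M` has modulus at most `1` and the trace is the sum of the
eigenvalues, `trace (M ^ k) ≤ n` for all `k ≥ 1`. If some row sum `∑ j, M i j` were at least `2`,
irreducibility would give a common return time `c` to `i` from all successors of `i`, so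
`(M ^ (c + 1)) i i ≥ ∑ j, M i j ≥ 2` and the diagonal entries of the powers of `M ^ (c + 1)`
would grow exponentially. Hence every row of `M` is a standard basis vector, i.e. `M` is the
matrix of a map `g`, and irreducibility says that every `j` lies on the forward `g`-orbit of
every `i`; in particular `g` is surjective, hence a permutation.
-/

open Finset

namespace Matrix

variable {ι : Type*} [Fintype ι] [DecidableEq ι]

theorem norm_trace_le_card_of_norm_spectrum_le_one (A : Matrix ι ι ℂ)
    (h : ∀ z ∈ spectrum ℂ A, ‖z‖ ≤ 1) : ‖A.trace‖ ≤ Fintype.card ι := by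
  have hroots : ∀ r ∈ A.charpoly.roots.map (‖·‖), r ≤ 1 := by
    simp only [Multiset.mem_map]
    rintro _ ⟨z, hz, rfl⟩
    exact h z (mem_spectrum_iff_isRoot_charpoly.mpr (Polynomial.isRoot_of_mem_roots hz))
  calc ‖A.trace‖ ≤ (A.charpoly.roots.map (‖·‖)).sum := by
        rw [trace_eq_sum_roots_charpoly]; exact norm_multiset_sum_le _
    _ ≤ Multiset.card A.charpoly.roots := by
        simpa using Multiset.sum_le_card_nsmul _ 1 hroots
    _ ≤ Fintype.card ι := by
        exact_mod_cast (Polynomial.card_roots' _).trans (charpoly_natDegree_eq_dim A).le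

theorem norm_le_one_of_mem_spectrum_pow {A : Matrix ι ι ℂ} (h : ∀ z ∈ spectrum ℂ A, ‖z‖ ≤ 1)
    {k : ℕ} (hk : 0 < k) : ∀ z ∈ spectrum ℂ (A ^ k), ‖z‖ ≤ 1 := by
  rw [spectrum.map_pow_of_pos A hk]
  rintro _ ⟨z, hz, rfl⟩
  simpa [norm_pow] using pow_le_one₀ (norm_nonneg z) (h z hz)

theorem trace_pow_le_card_of_charpoly_roots_norm_le_one (M : Matrix ι ι ℕ)
    (h : ∀ z : ℂ, (M.map fun a : ℕ => (a : ℂ)).charpoly.IsRoot z → ‖z‖ ≤ 1)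
    {k : ℕ} (hk : 0 < k) : (M ^ k).trace ≤ Fintype.card ι := by
  have hspec : ∀ z ∈ spectrum ℂ (M.map fun a : ℕ => (a : ℂ)), ‖z‖ ≤ 1 := fun z hz =>
    h z (mem_spectrum_iff_isRoot_charpoly.mp hz)
  have := norm_trace_le_card_of_norm_spectrum_le_one _
    (norm_le_one_of_mem_spectrum_pow hspec hk)
  have hcast : (M.map fun a : ℕ => (a : ℂ)) ^ k = (M ^ k).map (Nat.castRingHom ℂ) :=
    (M.map_pow (Nat.castRingHom ℂ) k).symm
  rw [hcast, ← AddMonoidHom.map_trace, Nat.coe_castRingHom, Complex.norm_natCast] at this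
  exact_mod_cast this

section NatMatrix

variable (M : Matrix ι ι ℕ)

theorem pow_apply_mul_pow_apply_le (a b : ℕ) (i k j : ι) :
    (M ^ a) i k * (M ^ b) k j ≤ (M ^ (a + b)) i j := by
  rw [pow_add, mul_apply]
  exact single_le_sum (f := fun k => (M ^ a) i k * (M ^ b) k j) (fun _ _ => Nat.zero_le _)
    (mem_univ k)

theorem pow_add_apply_pos {a b : ℕ} {i k j : ι} (h₁ : 0 < (M ^ a) i k) (h₂ : 0 < (M ^ b) k j) :
    0 < (M ^ (a + b)) i j :=
  (Nat.mul_pos h₁ h₂).trans_le (M.pow_apply_mul_pow_apply_le a b i k j)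

theorem pow_sum_apply_self_pos {α : Type*} {s : Finset α} {ℓ : α → ℕ} {i : ι}
    (h : ∀ l ∈ s, 0 < (M ^ ℓ l) i i) : 0 < (M ^ ∑ l ∈ s, ℓ l) i i := by
  classical
  induction s using Finset.induction_on with
  | empty => simp
  | insert l s hl ih =>
    rw [sum_insert hl]
    exact M.pow_add_apply_pos (h l (mem_insert_self l s))
      (ih fun l' hl' => h l' (mem_insert_of_mem hl'))

theorem pow_apply_self_pow_le (K : ℕ) (i : ι) (t : ℕ) : (M ^ K) i i ^ t ≤ (M ^ (K * t)) i i := by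
  induction t with
  | zero => simp
  | succ t ih =>
    calc (M ^ K) i i ^ (t + 1) = (M ^ K) i i ^ t * (M ^ K) i i := pow_succ _ _
      _ ≤ (M ^ (K * t)) i i * (M ^ K) i i := Nat.mul_le_mul_right _ ih
      _ ≤ (M ^ (K * (t + 1))) i i := M.pow_apply_mul_pow_apply_le _ _ i i i

/-- Return from the successor `k` to `i`, then run once around the loop `i → l ⇝ i` through each
other successor `l`: the total length does not depend on `k`. -/
theorem exists_pow_apply_pos_of_apply_pos (i : ι) (hret : ∀ k, ∃ a, 0 < (M ^ a) k i) :
    ∃ c, ∀ k, 0 < M i k → 0 < (M ^ c) k i := by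
  choose a ha using hret
  let ℓ : ι → ℕ := fun k => if 0 < M i k then 1 + a k else 0
  have hloop : ∀ k, 0 < (M ^ ℓ k) i i := by
    intro k
    by_cases hk : 0 < M i k
    · simpa only [ℓ, if_pos hk] using M.pow_add_apply_pos (by rwa [pow_one]) (ha k)
    · simp [ℓ, hk]
  refine ⟨∑ l, ℓ l - 1, fun k hk => ?_⟩
  have hsplit : ∑ l, ℓ l - 1 = a k + ∑ l ∈ univ.erase k, ℓ l := by
    rw [← add_sum_erase _ _ (mem_univ k)]
    simp only [ℓ, if_pos hk]
    omega
  rw [hsplit]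
  exact M.pow_add_apply_pos (ha k) (M.pow_sum_apply_self_pos fun l _ => hloop l)

theorem exists_sum_apply_le_pow_apply_self (i : ι) (hret : ∀ k, ∃ a, 0 < (M ^ a) k i) :
    ∃ K, 0 < K ∧ ∑ j, M i j ≤ (M ^ K) i i := by
  obtain ⟨c, hc⟩ := M.exists_pow_apply_pos_of_apply_pos i hret
  refine ⟨1 + c, by omega, ?_⟩
  rw [pow_add, pow_one, mul_apply]
  refine sum_le_sum fun k _ => ?_
  rcases (M i k).eq_zero_or_pos with h | h
  · simp [h]
  · exact Nat.le_mul_of_pos_right _ (hc k h)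

theorem sum_apply_le_one_of_trace_pow_le (htr : ∀ k, 0 < k → (M ^ k).trace ≤ Fintype.card ι)
    (i : ι) (hret : ∀ k, ∃ a, 0 < (M ^ a) k i) : ∑ j, M i j ≤ 1 := by
  obtain ⟨K, hK, hle⟩ := M.exists_sum_apply_le_pow_apply_self i hret
  by_contra! hgt
  set N := Fintype.card ι
  have hN : 0 < N := Fintype.card_pos_iff.mpr ⟨i⟩
  have : 2 ^ N ≤ N :=
    calc 2 ^ N ≤ (M ^ K) i i ^ N := Nat.pow_le_pow_left (hgt.trans_le hle) N
      _ ≤ (M ^ (K * N)) i i := M.pow_apply_self_pow_le K i N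
      _ ≤ (M ^ (K * N)).trace :=
        single_le_sum (f := fun k => (M ^ (K * N)) k k) (fun _ _ => Nat.zero_le _) (mem_univ i)
      _ ≤ N := htr _ (Nat.mul_pos hK hN)
  exact Nat.lt_two_pow_self.not_ge this

end NatMatrix

theorem pow_apply_eq_ite_iterate {R : Type*} [Semiring R] {M : Matrix ι ι R} {g : ι → ι}
    (hg : ∀ i j, M i j = if g i = j then 1 else 0) (m : ℕ) (i j : ι) :
    (M ^ m) i j = if g^[m] i = j then 1 else 0 := by
  induction m generalizing i with
  | zero => rw [pow_zero]; exact one_apply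
  | succ m ih =>
    simp only [pow_succ', mul_apply, hg, ih, ite_mul, one_mul, zero_mul, sum_ite_eq, mem_univ,
      if_true, Function.iterate_succ_apply]
    rfl

end Matrix

theorem Finset.exists_eq_ite_of_sum_eq_one {ι : Type*} [Fintype ι] [DecidableEq ι] {f : ι → ℕ}
    (h : ∑ k, f k = 1) : ∃ j, ∀ k, f k = if j = k then 1 else 0 := by
  obtain ⟨j, hj⟩ := (Finsupp.sum_eq_one_iff (Finsupp.equivFunOnFinite.symm f)).mp
    (by rwa [Finsupp.sum_fintype _ _ fun _ => rfl])
  refine ⟨j, fun k => ?_⟩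
  simpa [Finsupp.single_apply] using DFunLike.congr_fun hj k

theorem stmt_4_general {n : ℕ} (M : Matrix (Fin n) (Fin n) ℕ)
    (hirr : ∀ i j, ∃ m : ℕ, 1 ≤ m ∧ 0 < (M ^ m) i j)
    (hrow : ∀ i, 1 ≤ ∑ j, M i j)
    (hspec : ∀ z : ℂ, (Matrix.charpoly (M.map fun a : ℕ => (a : ℂ))).IsRoot z →
      ‖z‖ ≤ 1) :
    ∃ σ : Equiv.Perm (Fin n),
      (∀ i j, M i j = if σ i = j then 1 else 0) ∧
      ∀ i j : Fin n, ∃ m : ℕ, (σ ^ m) i = j := by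
  have htrace : ∀ k, 0 < k → (M ^ k).trace ≤ Fintype.card (Fin n) := fun _ =>
    M.trace_pow_le_card_of_charpoly_roots_norm_le_one hspec
  have hrow_eq : ∀ i, ∑ j, M i j = 1 := fun i =>
    (M.sum_apply_le_one_of_trace_pow_le htrace i fun k => (hirr k i).imp fun _ h => h.2).antisymm
      (hrow i)
  choose g hg using fun i => exists_eq_ite_of_sum_eq_one (hrow_eq i)
  have hiter : ∀ i j, ∃ m, 1 ≤ m ∧ g^[m] i = j := fun i j => by
    obtain ⟨m, hm, hpos⟩ := hirr i j
    rw [Matrix.pow_apply_eq_ite_iterate hg] at hpos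
    exact ⟨m, hm, by_contra fun h => by simp [h] at hpos⟩
  have hsurj : Function.Surjective g := fun j => by
    obtain ⟨m, hm, hj⟩ := hiter j j
    refine ⟨g^[m - 1] j, ?_⟩
    rwa [← Function.iterate_succ_apply' g, Nat.succ_eq_add_one, Nat.sub_add_cancel hm]
  refine ⟨Equiv.ofBijective g hsurj.bijective_of_finite, hg, fun i j => ?_⟩
  obtain ⟨m, -, hm⟩ := hiter i j
  exact ⟨m, by rwa [Equiv.Perm.coe_pow]⟩

/-- An irreducible nonnegative integer square matrix with all row sums at least 1
whose spectral radius equals 1 (all complex eigenvalues have modulus at most 1)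
is a transitive permutation matrix: there is a permutation `σ` with `M i j = 1`
iff `σ i = j`, and the cyclic group generated by `σ` acts transitively. -/
theorem stmt_4 {n : ℕ} (hn : 1 ≤ n) (M : Matrix (Fin n) (Fin n) ℕ)
    (hirr : ∀ i j, ∃ m : ℕ, 1 ≤ m ∧ 0 < (M ^ m) i j)
    (hrow : ∀ i, 1 ≤ ∑ j, M i j)
    (hspec : ∀ z : ℂ, (Matrix.charpoly (M.map fun a : ℕ => (a : ℂ))).IsRoot z →
      ‖z‖ ≤ 1) :
    ∃ σ : Equiv.Perm (Fin n),
      (∀ i j, M i j = if σ i = j then 1 else 0) ∧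
      ∀ i j : Fin n, ∃ m : ℕ, (σ ^ m) i = j :=
  stmt_4_general M hirr hrow hspec
end

section
/- Let F ≅ ⟨a, b, c, d | a² = b² = c² = d² = 1⟩ be the free product of four copies of ℤ/2ℤ. Then the assignment a ↦ b, b ↦ c, c ↦ d, d ↦ cbdadbc extends to a well-defined automorphism Φ of F (it is a homomorphism on F and it is bijective). -/
/-- Relations presenting the free product `C₂ * C₂ * C₂ * C₂` on four generators. -/
def c2Rels : Set (FreeGroup (Fin 4)) := {r | ∃ i : Fin 4, r = FreeGroup.of i * FreeGroup.of i}

/-- The free product of four copies of `ℤ/2ℤ`. -/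
abbrev FourC2 : Type := PresentedGroup c2Rels

namespace FourC2Aux

local notation "og" => (PresentedGroup.of : Fin 4 → FourC2)

lemma sq (i : Fin 4) : og i * og i = 1 := by
  have : (FreeGroup.of i * FreeGroup.of i : FreeGroup (Fin 4)) ∈
      Subgroup.normalClosure c2Rels := Subgroup.subset_normalClosure ⟨i, rfl⟩
  exact (QuotientGroup.eq_one_iff _).2 this

lemma key (i : Fin 4) (x : FourC2) : og i * (og i * x) = x := by
  rw [← mul_assoc, sq, one_mul]

/-- a ↦ b, b ↦ c, c ↦ d, d ↦ cbdadbc -/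
noncomputable def f : Fin 4 → FourC2 :=
  ![og 1, og 2, og 3, og 2 * og 1 * og 3 * og 0 * og 3 * og 1 * og 2]

/-- inverse: b ↦ a, c ↦ b, d ↦ c, a ↦ cabdbac -/
noncomputable def g : Fin 4 → FourC2 :=
  ![og 2 * og 0 * og 1 * og 3 * og 1 * og 0 * og 2, og 0, og 1, og 2]

lemma hf : ∀ r ∈ c2Rels, FreeGroup.lift f r = 1 := by
  rintro r ⟨i, rfl⟩
  rw [map_mul, FreeGroup.lift_apply_of]
  fin_cases i
  · exact sq 1
  · exact sq 2
  · exact sq 3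
  · show (og 2 * og 1 * og 3 * og 0 * og 3 * og 1 * og 2) *
        (og 2 * og 1 * og 3 * og 0 * og 3 * og 1 * og 2) = 1
    simp only [mul_assoc, key, sq]

lemma hg : ∀ r ∈ c2Rels, FreeGroup.lift g r = 1 := by
  rintro r ⟨i, rfl⟩
  rw [map_mul, FreeGroup.lift_apply_of]
  fin_cases i
  · show (og 2 * og 0 * og 1 * og 3 * og 1 * og 0 * og 2) *
        (og 2 * og 0 * og 1 * og 3 * og 1 * og 0 * og 2) = 1
    simp only [mul_assoc, key, sq]
  · exact sq 0
  · exact sq 1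
  · exact sq 2

noncomputable def Φ : FourC2 →* FourC2 := PresentedGroup.toGroup hf
noncomputable def Ψ : FourC2 →* FourC2 := PresentedGroup.toGroup hg

lemma Φ0 : Φ (og 0) = og 1 := PresentedGroup.toGroup.of hf
lemma Φ1 : Φ (og 1) = og 2 := PresentedGroup.toGroup.of hf
lemma Φ2 : Φ (og 2) = og 3 := PresentedGroup.toGroup.of hf
lemma Φ3 : Φ (og 3) = og 2 * og 1 * og 3 * og 0 * og 3 * og 1 * og 2 :=
  PresentedGroup.toGroup.of hf
lemma Ψ0 : Ψ (og 0) = og 2 * og 0 * og 1 * og 3 * og 1 * og 0 * og 2 :=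
  PresentedGroup.toGroup.of hg
lemma Ψ1 : Ψ (og 1) = og 0 := PresentedGroup.toGroup.of hg
lemma Ψ2 : Ψ (og 2) = og 1 := PresentedGroup.toGroup.of hg
lemma Ψ3 : Ψ (og 3) = og 2 := PresentedGroup.toGroup.of hg

lemma comp1 : Ψ.comp Φ = MonoidHom.id FourC2 := by
  apply PresentedGroup.ext
  intro i
  fin_cases i
  · show Ψ (Φ (og 0)) = og 0
    rw [Φ0, Ψ1]
  · show Ψ (Φ (og 1)) = og 1
    rw [Φ1, Ψ2]
  · show Ψ (Φ (og 2)) = og 2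
    rw [Φ2, Ψ3]
  · show Ψ (Φ (og 3)) = og 3
    rw [Φ3]
    simp only [map_mul, Ψ0, Ψ1, Ψ2, Ψ3]
    simp only [mul_assoc, key, sq, mul_one, one_mul]

lemma comp2 : Φ.comp Ψ = MonoidHom.id FourC2 := by
  apply PresentedGroup.ext
  intro i
  fin_cases i
  · show Φ (Ψ (og 0)) = og 0
    rw [Ψ0]
    simp only [map_mul, Φ0, Φ1, Φ2, Φ3]
    simp only [mul_assoc, key, sq, mul_one, one_mul]
  · show Φ (Ψ (og 1)) = og 1
    rw [Ψ1, Φ0]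
  · show Φ (Ψ (og 2)) = og 2
    rw [Ψ2, Φ1]
  · show Φ (Ψ (og 3)) = og 3
    rw [Ψ3, Φ2]

end FourC2Aux

/-- In `F = ⟨a,b,c,d ∣ a² = b² = c² = d² = 1⟩`, the assignment
`a ↦ b, b ↦ c, c ↦ d, d ↦ cbdadbc` extends to an automorphism of `F`. -/
theorem stmt_9 :
    ∃ Φ : FourC2 ≃* FourC2,
      Φ (PresentedGroup.of 0) = PresentedGroup.of 1 ∧
      Φ (PresentedGroup.of 1) = PresentedGroup.of 2 ∧
      Φ (PresentedGroup.of 2) = PresentedGroup.of 3 ∧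
      Φ (PresentedGroup.of 3) =
        PresentedGroup.of 2 * PresentedGroup.of 1 * PresentedGroup.of 3 *
          PresentedGroup.of 0 * PresentedGroup.of 3 * PresentedGroup.of 1 *
          PresentedGroup.of 2 := by
  exact ⟨FourC2Aux.Φ.toMulEquiv FourC2Aux.Ψ FourC2Aux.comp1 FourC2Aux.comp2,
    FourC2Aux.Φ0, FourC2Aux.Φ1, FourC2Aux.Φ2, FourC2Aux.Φ3⟩
end
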